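/- arXiv:1905.12446 — 12 statements merged into one kernel-verified Lean document; each statement's English description precedes it below -/
import Mathlib

section
/- Let R be a commutative ring with unity and Y ⊆ Spec(R). Then Y is compact in the Zariski topology if and only if every proper strong H_Y-ideal I of R satisfies h_Y(I) ≠ ∅. -/
variable {R : Type*} [CommRing R]

/-- h_Y(S) = {P ∈ Y : S ⊆ P}. -/
def hY (Y : Set (PrimeSpectrum R)) (S : Set R) : Set (PrimeSpectrum R) :=
  {P ∈ Y | S ⊆ P.asIdeal}

/-- kh_Y(S) = ⋂ {P ∈ Y : S ⊆ P} (the whole ring if there is no such P). -/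
def khY (Y : Set (PrimeSpectrum R)) (S : Set R) : Ideal R :=
  sInf {J : Ideal R | ∃ P ∈ Y, S ⊆ (P.asIdeal : Set R) ∧ J = P.asIdeal}

/-- I is an H_Y-ideal. -/
def IsHYIdeal (Y : Set (PrimeSpectrum R)) (I : Ideal R) : Prop :=
  ∀ a ∈ I, khY Y {a} ≤ I

/-- I is an H_{YJ}-ideal. -/
def IsHYJIdeal (Y : Set (PrimeSpectrum R)) (J I : Ideal R) : Prop :=
  ∀ a ∈ I, khY Y {a} ⊓ J ≤ I

/-- I is a strong H_Y-ideal. -/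
def IsStrongHYIdeal (Y : Set (PrimeSpectrum R)) (I : Ideal R) : Prop :=
  ∀ F : Finset R, (↑F : Set R) ⊆ (I : Set R) → khY Y ↑F ≤ I

/-- I is a strong H_{YJ}-ideal. -/
def IsStrongHYJIdeal (Y : Set (PrimeSpectrum R)) (J I : Ideal R) : Prop :=
  ∀ F : Finset R, (↑F : Set R) ⊆ (I : Set R) → khY Y ↑F ⊓ J ≤ I

/-- I is a relative H_Y-ideal. -/
def IsRelativeHYIdeal (Y : Set (PrimeSpectrum R)) (I : Ideal R) : Prop :=
  ∃ J : Ideal R, ¬ J ≤ I ∧ IsHYJIdeal Y J I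

/-- I is a relative strong H_Y-ideal. -/
def IsRelativeStrongHYIdeal (Y : Set (PrimeSpectrum R)) (I : Ideal R) : Prop :=
  ∃ J : Ideal R, ¬ J ≤ I ∧ IsStrongHYJIdeal Y J I


lemma khY_mono (Y : Set (PrimeSpectrum R)) {S S' : Set R} (h : S ⊆ S') :
    khY Y S ≤ khY Y S' := by
  apply le_sInf
  rintro J ⟨P, hP, hS', rfl⟩
  exact sInf_le ⟨P, hP, h.trans hS', rfl⟩

lemma khY_le_of_mem (Y : Set (PrimeSpectrum R)) {S : Set R} {P : PrimeSpectrum R}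
    (hP : P ∈ Y) (hS : S ⊆ (P.asIdeal : Set R)) : khY Y S ≤ P.asIdeal :=
  sInf_le ⟨P, hP, hS, rfl⟩

lemma mem_khY_self (Y : Set (PrimeSpectrum R)) {S : Set R} {a : R} (ha : a ∈ S) :
    a ∈ khY Y S := by
  apply Submodule.mem_sInf.mpr
  rintro J ⟨P, hP, hS, rfl⟩
  exact hS ha

theorem stmt1 (Y : Set (PrimeSpectrum R)) :
    IsCompact Y ↔
      ∀ I : Ideal R, I ≠ ⊤ → IsStrongHYIdeal Y I → (hY Y (I : Set R)).Nonempty := by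
  classical
  constructor
  · intro hc I hItop hstrong
    by_contra hne
    rw [Set.not_nonempty_iff_eq_empty] at hne
    have hcov : Y ⊆ ⋃ a : I, (PrimeSpectrum.basicOpen (a : R) : Set (PrimeSpectrum R)) := by
      intro P hP
      have hns : ¬ (I : Set R) ⊆ (P.asIdeal : Set R) := by
        intro h
        have : P ∈ hY Y (I : Set R) := ⟨hP, h⟩
        rw [hne] at this
        exact this
      obtain ⟨a, haI, haP⟩ := Set.not_subset.mp hns
      exact Set.mem_iUnion.mpr ⟨⟨a, haI⟩, haP⟩
    obtain ⟨t, ht⟩ := hc.elim_finite_subcover _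
      (fun a : I => (PrimeSpectrum.basicOpen (a : R)).isOpen) hcov
    set F : Finset R := t.image (fun a : I => (a : R)) with hF
    have hFsub : (↑F : Set R) ⊆ (I : Set R) := by
      intro x hx
      simp only [hF, Finset.coe_image, Set.mem_image] at hx
      obtain ⟨a, _, rfl⟩ := hx
      exact a.2
    have hempty : {J : Ideal R | ∃ P ∈ Y, (↑F : Set R) ⊆ (P.asIdeal : Set R) ∧ J = P.asIdeal} = ∅ := by
      ext J
      simp only [Set.mem_setOf_eq, Set.mem_empty_iff_false, iff_false]
      rintro ⟨P, hPY, hFP, rfl⟩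
      obtain ⟨a, hat, haP⟩ := Set.mem_iUnion₂.mp (ht hPY)
      have haF : (a : R) ∈ (↑F : Set R) := by
        simp only [hF, Finset.coe_image, Set.mem_image]
        exact ⟨a, hat, rfl⟩
      exact haP (hFP haF)
    have : khY Y (↑F : Set R) = ⊤ := by
      rw [khY, hempty, sInf_empty]
    exact hItop (top_le_iff.mp (this ▸ hstrong F hFsub))
  · intro H
    rw [isCompact_iff_finite_subfamily_closed]
    intro ι Z hZc hZe
    by_contra hno
    push_neg at hno
    choose S hS using fun i => (PrimeSpectrum.isClosed_iff_zeroLocus (Z i)).mp (hZc i)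
    set T : Set R := ⋃ i, S i with hT
    -- every finite subset of T is contained in some prime of Y
    have key : ∀ F : Finset R, (↑F : Set R) ⊆ T →
        ∃ P ∈ Y, (↑F : Set R) ⊆ (P.asIdeal : Set R) := by
      intro F hFT
      have hch : ∀ x : F, ∃ i, (x : R) ∈ S i := by
        intro x
        exact Set.mem_iUnion.mp (hFT x.2)
      choose f hf using hch
      obtain ⟨P, hPY, hPint⟩ := hno (F.attach.image f)
      refine ⟨P, hPY, ?_⟩
      intro x hx
      have hx' : (⟨x, hx⟩ : {y // y ∈ F}) ∈ F.attach := Finset.mem_attach _ _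
      have hPi : P ∈ Z (f ⟨x, hx⟩) := by
        have := Set.mem_iInter₂.mp hPint (f ⟨x, hx⟩)
        exact this (Finset.mem_image_of_mem f hx')
      rw [hS] at hPi
      exact hPi (hf ⟨x, hx⟩)
    -- build the ideal I
    let I : Ideal R :=
      { carrier := {x | ∃ F : Finset R, (↑F : Set R) ⊆ T ∧ x ∈ khY Y ↑F}
        zero_mem' := ⟨∅, by simp, zero_mem _⟩
        add_mem' := by
          rintro x y ⟨F, hF, hx⟩ ⟨G, hG, hy⟩
          refine ⟨F ∪ G, ?_, ?_⟩
          · rw [Finset.coe_union]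
            exact Set.union_subset hF hG
          · have h1 := khY_mono Y (S := (↑F : Set R)) (S' := ↑(F ∪ G)) (by
              rw [Finset.coe_union]; exact Set.subset_union_left)
            have h2 := khY_mono Y (S := (↑G : Set R)) (S' := ↑(F ∪ G)) (by
              rw [Finset.coe_union]; exact Set.subset_union_right)
            exact add_mem (h1 hx) (h2 hy)
        smul_mem' := by
          rintro c x ⟨F, hF, hx⟩
          exact ⟨F, hF, Ideal.mul_mem_left _ c hx⟩ }
    have hImem : ∀ x, x ∈ I ↔ ∃ F : Finset R, (↑F : Set R) ⊆ T ∧ x ∈ khY Y ↑F :=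
      fun x => Iff.rfl
    have hIproper : I ≠ ⊤ := by
      intro htop
      have h1 : (1 : R) ∈ I := htop ▸ Submodule.mem_top
      obtain ⟨F, hFT, h1F⟩ := (hImem 1).mp h1
      obtain ⟨P, hPY, hFP⟩ := key F hFT
      exact P.asIdeal.ne_top_iff_one.mp P.2.ne_top (khY_le_of_mem Y hPY hFP h1F)
    have hIstrong : IsStrongHYIdeal Y I := by
      intro G hGI
      have hch : ∀ x : G, ∃ F : Finset R, (↑F : Set R) ⊆ T ∧ (x : R) ∈ khY Y ↑F := by
        intro x
        exact (hImem x).mp (hGI x.2)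
      choose f hf1 hf2 using hch
      set F : Finset R := G.attach.biUnion f with hFdef
      have hFT : (↑F : Set R) ⊆ T := by
        intro x hx
        rw [hFdef] at hx
        simp only [Finset.coe_biUnion, Set.mem_iUnion] at hx
        obtain ⟨g, _, hxg⟩ := hx
        exact hf1 g hxg
      have hGF : (↑G : Set R) ⊆ (khY Y ↑F : Set R) := by
        intro x hx
        have hsub : (↑(f ⟨x, hx⟩) : Set R) ⊆ (↑F : Set R) := by
          intro y hy
          rw [hFdef]
          simp only [Finset.coe_biUnion, Set.mem_iUnion]
          exact ⟨⟨x, hx⟩, Finset.mem_attach _ _, hy⟩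
        exact khY_mono Y hsub (hf2 ⟨x, hx⟩)
      have h1 : khY Y (↑G : Set R) ≤ khY Y (↑F : Set R) := by
        apply le_sInf
        rintro J ⟨P, hPY, hFP, rfl⟩
        apply sInf_le
        exact ⟨P, hPY, hGF.trans (khY_le_of_mem Y hPY hFP), rfl⟩
      intro x hx
      exact (hImem x).mpr ⟨F, hFT, h1 hx⟩
    obtain ⟨P, hPY, hIP⟩ := H I hIproper hIstrong
    have hTP : T ⊆ (P.asIdeal : Set R) := by
      intro a haT
      apply hIP
      exact (hImem a).mpr ⟨{a}, by simpa using haT, mem_khY_self Y (by simp)⟩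
    have : P ∈ Y ∩ ⋂ i, Z i := by
      refine ⟨hPY, Set.mem_iInter.mpr fun i => ?_⟩
      rw [hS i]
      exact fun a ha => hTP (Set.mem_iUnion.mpr ⟨i, ha⟩)
    rw [hZe] at this
    exact this
end

section
/- Let R be a commutative ring with unity, Y ⊆ Spec(R), J an ideal of R, and I an H_{YJ}-ideal. Then every minimal prime ideal P over I is an H_{YJ}-ideal. -/
variable {R : Type*} [CommRing R]

/-- If `P` is a minimal prime over `I` and `a ∈ P`, then `s * a ^ n ∈ I` for some
`s ∉ P` and some `n`. -/
lemma exists_mul_pow_mem_of_mem_minimalPrimes {I P : Ideal R} (hP : P ∈ I.minimalPrimes)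
    {a : R} (ha : a ∈ P) : ∃ s ∉ P, ∃ n : ℕ, s * a ^ n ∈ I := by
  by_contra h
  push_neg at h
  -- the multiplicative set {s * a ^ n | s ∉ P}
  set M : Submonoid R :=
    { carrier := {x | ∃ s ∉ P, ∃ n : ℕ, x = s * a ^ n}
      one_mem' := ⟨1, hP.1.1.ne_top ∘ (Ideal.eq_top_iff_one P).mpr, 0, by ring⟩
      mul_mem' := by
        rintro x y ⟨s, hs, n, rfl⟩ ⟨t, ht, m, rfl⟩
        exact ⟨s * t, fun hst => ((hP.1.1.mem_or_mem hst).elim hs ht), n + m, by ring⟩ } with hM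
  have hdisj : Disjoint (I : Set R) (M : Set R) := by
    rw [Set.disjoint_left]
    rintro x hxI ⟨s, hs, n, rfl⟩
    exact h s hs n hxI
  obtain ⟨Q, hQp, hIQ, hQd⟩ := Ideal.exists_le_prime_disjoint I M hdisj
  have hQP : Q ≤ P := by
    intro x hx
    by_contra hxP
    exact Set.disjoint_left.mp hQd hx ⟨x, hxP, 0, by ring⟩
  have hPQ : P ≤ Q := hP.2 ⟨hQp, hIQ⟩ hQP
  exact Set.disjoint_left.mp hQd (hPQ ha) ⟨1, hP.1.1.ne_top ∘ (Ideal.eq_top_iff_one P).mpr, 1,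
    by ring⟩

theorem stmt4 (Y : Set (PrimeSpectrum R)) (J I : Ideal R) (hI : IsHYJIdeal Y J I)
    (P : Ideal R) (hP : P ∈ I.minimalPrimes) : IsHYJIdeal Y J P := by
  have hprime : P.IsPrime := hP.1.1
  intro a ha x hx
  rw [Ideal.mem_inf] at hx
  obtain ⟨hx1, hxJ⟩ := hx
  obtain ⟨s, hs, n, hsa⟩ := exists_mul_pow_mem_of_mem_minimalPrimes hP ha
  have key : s * x ∈ khY Y {s * a ^ n} ⊓ J := by
    rw [Ideal.mem_inf]
    refine ⟨?_, J.mul_mem_left s hxJ⟩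
    rw [khY, Ideal.mem_sInf]
    rintro K ⟨Q, hQY, hQsa, rfl⟩
    have hsaQ : s * a ^ n ∈ Q.asIdeal := hQsa rfl
    rcases Q.isPrime.mem_or_mem hsaQ with hsQ | haQ
    · exact Q.asIdeal.mul_mem_right x hsQ
    · have haQ' : a ∈ Q.asIdeal := by
        rcases n with _ | n
        · exact absurd (Q.asIdeal.eq_top_iff_one.mpr (by simpa using haQ)) Q.isPrime.ne_top
        · exact Q.isPrime.mem_of_pow_mem _ haQ
      have hxQ : x ∈ Q.asIdeal := by
        rw [khY, Ideal.mem_sInf] at hx1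
        exact hx1 ⟨Q, hQY, by simpa using haQ', rfl⟩
      exact Q.asIdeal.mul_mem_left s hxQ
  have hsxI : s * x ∈ I := hI _ hsa key
  have hsxP : s * x ∈ P := hP.1.2 hsxI
  exact (hprime.mem_or_mem hsxP).resolve_left hs
end

section
/- Let R be a commutative ring with unity, Y ⊆ Spec(R), J an ideal of R, and P a prime ideal of R. Then P is an H_{YJ}-ideal if and only if P is an H_Y-ideal or J ⊆ P. -/
variable {R : Type*} [CommRing R]

theorem stmt5 (Y : Set (PrimeSpectrum R)) (J P : Ideal R) (hP : P.IsPrime) :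
    IsHYJIdeal Y J P ↔ IsHYIdeal Y P ∨ J ≤ P := by
  constructor
  · intro h
    by_cases hJ : J ≤ P
    · exact Or.inr hJ
    · left
      intro a ha x hx
      obtain ⟨j, hjJ, hjP⟩ := SetLike.not_le_iff_exists.mp hJ
      have hxj : x * j ∈ khY Y {a} ⊓ J := by
        refine ⟨Ideal.mul_mem_right _ _ hx, Ideal.mul_mem_left _ _ hjJ⟩
      have := h a ha hxj
      rcases hP.mem_or_mem this with h1 | h1
      · exact h1
      · exact absurd h1 hjP
  · rintro (h | h) a ha x hx
    · exact h a ha hx.1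
    · exact h hx.2
end

section
/- Let R be a commutative ring with unity, Y ⊆ Spec(R), J an ideal, and P a prime ideal which is a strong H_{YJ}-ideal. Then P is a strong H_Y-ideal or J ⊆ P. -/
variable {R : Type*} [CommRing R]

theorem stmt6 (Y : Set (PrimeSpectrum R)) (J P : Ideal R) (hP : P.IsPrime)
    (h : IsStrongHYJIdeal Y J P) : IsStrongHYIdeal Y P ∨ J ≤ P := by
  by_cases hJ : J ≤ P
  · exact Or.inr hJ
  · left
    obtain ⟨j, hjJ, hjP⟩ := SetLike.not_le_iff_exists.mp hJ
    intro F hF x hx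
    have hxj : x * j ∈ khY Y (↑F) ⊓ J := by
      refine ⟨Ideal.mul_mem_right _ _ hx, Ideal.mul_mem_left _ _ hjJ⟩
    have := h F hF hxj
    rcases hP.mem_or_mem this with h1 | h1
    · exact h1
    · exact absurd h1 hjP
end

section
/- Let R be a commutative ring with unity, Y ⊆ Spec(R), and I, J ideals of R. Then I is an H_{YJ}-ideal if and only if there exists an H_Y-ideal K containing I with K ∩ J ⊆ I. -/
variable {R : Type*} [CommRing R]

lemma mem_khY' {Y : Set (PrimeSpectrum R)} {S : Set R} {z : R} :
    z ∈ khY Y S ↔ ∀ P ∈ Y, S ⊆ (P.asIdeal : Set R) → z ∈ P.asIdeal := by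
  constructor
  · intro h P hP hS
    exact (Submodule.mem_sInf.mp h) P.asIdeal ⟨P, hP, hS, rfl⟩
  · intro h
    refine Submodule.mem_sInf.mpr ?_
    rintro L ⟨P, hP, hS, rfl⟩
    exact h P hP hS

lemma self_mem_khY' (Y : Set (PrimeSpectrum R)) (a : R) : a ∈ khY Y {a} :=
  mem_khY'.mpr fun _ _ hS => hS rfl

lemma khY_le_khY' {Y : Set (PrimeSpectrum R)} {a b : R}
    (h : ∀ P ∈ Y, a ∈ P.asIdeal → b ∈ P.asIdeal) : khY Y {b} ≤ khY Y {a} := by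
  apply sInf_le_sInf
  rintro L ⟨P, hP, hS, rfl⟩
  exact ⟨P, hP, Set.singleton_subset_iff.mpr (h P hP (hS rfl)), rfl⟩

theorem stmt7 (Y : Set (PrimeSpectrum R)) (I J : Ideal R) :
    IsHYJIdeal Y J I ↔ ∃ K : Ideal R, IsHYIdeal Y K ∧ I ≤ K ∧ K ⊓ J ≤ I := by
  constructor
  · intro h
    -- Key closure step: if z ∈ khY {a} ∩ J and z * a ∈ I, then z ∈ I.
    have key : ∀ a z : R, z ∈ khY Y {a} → z ∈ J → z * a ∈ I → z ∈ I := by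
      intro a z hza hzJ hI
      have hz : z ∈ khY Y {z * a} := by
        refine mem_khY'.mpr fun P hP hS => ?_
        have hmem : z * a ∈ P.asIdeal := hS rfl
        rcases P.isPrime.mem_or_mem hmem with hzP | haP
        · exact hzP
        · exact mem_khY'.mp hza P hP (Set.singleton_subset_iff.mpr haP)
      exact h (z * a) hI (Submodule.mem_inf.mpr ⟨hz, hzJ⟩)
    -- The ideal K = {x | khY {x} ⊓ J ≤ I}.
    refine ⟨{ carrier := {x : R | khY Y {x} ⊓ J ≤ I}
              zero_mem' := h 0 I.zero_mem
              add_mem' := ?_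
              smul_mem' := ?_ }, ?_, ?_, ?_⟩
    · intro x y hx hy
      intro z hz
      rw [Submodule.mem_inf] at hz
      obtain ⟨hz1, hz2⟩ := hz
      have hzx : z * x ∈ I := hx (Submodule.mem_inf.mpr
        ⟨Ideal.mul_mem_left _ z (self_mem_khY' Y x), Ideal.mul_mem_right x J hz2⟩)
      have hzy : z * y ∈ I := hy (Submodule.mem_inf.mpr
        ⟨Ideal.mul_mem_left _ z (self_mem_khY' Y y), Ideal.mul_mem_right y J hz2⟩)
      have : z * (x + y) ∈ I := by rw [mul_add]; exact add_mem hzx hzy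
      exact key (x + y) z hz1 hz2 this
    · intro r x hx
      refine le_trans (inf_le_inf_right J ?_) hx
      exact khY_le_khY' fun P hP hxP => Ideal.mul_mem_left _ r hxP
    · -- K is an H_Y-ideal
      intro a ha b hb
      have : khY Y {b} ≤ khY Y {a} :=
        khY_le_khY' fun P hP haP =>
          mem_khY'.mp hb P hP (Set.singleton_subset_iff.mpr haP)
      exact le_trans (inf_le_inf_right J this) ha
    · intro a haI
      exact h a haI
    · intro x hx
      rw [Submodule.mem_inf] at hx
      obtain ⟨hx1, hx2⟩ := hx
      exact hx1 (Submodule.mem_inf.mpr ⟨self_mem_khY' Y x, hx2⟩)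
  · rintro ⟨K, hK, hIK, hKJ⟩ a haI
    exact le_trans (inf_le_inf_right J (hK a (hIK haI))) hKJ
end

section
/- Let R be a commutative ring with unity, Y ⊆ Spec(R), and I, J ideals of R. Then I is an H_{YJ}-ideal if and only if I ∩ J is an H_{YJ}-ideal. -/
variable {R : Type*} [CommRing R]

theorem stmt11 (Y : Set (PrimeSpectrum R)) (I J : Ideal R) :
    IsHYJIdeal Y J I ↔ IsHYJIdeal Y J (I ⊓ J) := by
  constructor
  · intro h a ha x hx
    have haI : a ∈ I := ha.1
    refine ⟨h a haI hx, hx.2⟩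
  · intro h a ha x hx
    have hxJ : x ∈ J := hx.2
    have haxIJ : a * x ∈ I ⊓ J := ⟨I.mul_mem_right x ha, J.mul_mem_left a hxJ⟩
    have hxk : x ∈ khY Y {a * x} := by
      rw [khY, Submodule.mem_sInf]
      rintro K ⟨P, hPY, hsub, rfl⟩
      have hax : a * x ∈ P.asIdeal := hsub rfl
      rcases P.isPrime.mem_or_mem hax with hP | hP
      · have hx1 : x ∈ khY Y {a} := hx.1
        exact Submodule.mem_sInf.mp hx1 P.asIdeal ⟨P, hPY, by simpa using hP, rfl⟩
      · exact hP
    exact (h (a * x) haxIJ ⟨hxk, hxJ⟩).1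
end

section
/- Let R be a commutative ring with unity, Y ⊆ Spec(R), J an ideal of R, and I an H_{YJ}-ideal. Then √I (the radical of I) is an H_{Y√J}-ideal. -/
variable {R : Type*} [CommRing R]

lemma khY_pow_le (Y : Set (PrimeSpectrum R)) (a : R) (n : ℕ) (hn : n ≠ 0) :
    khY Y {a} ≤ khY Y {a ^ n} := by
  apply sInf_le_sInf
  rintro K ⟨P, hP, hsub, rfl⟩
  refine ⟨P, hP, ?_, rfl⟩
  simp only [Set.singleton_subset_iff, SetLike.mem_coe] at hsub ⊢
  exact P.isPrime.mem_of_pow_mem n (by simpa using hsub)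

theorem stmt13 (Y : Set (PrimeSpectrum R)) (I J : Ideal R)
    (h : IsHYJIdeal Y J I) : IsHYJIdeal Y J.radical I.radical := by
  intro a ha x hx
  obtain ⟨n, hn⟩ := ha
  obtain ⟨m, hm⟩ := hx.2
  rcases Nat.eq_zero_or_pos n with rfl | hnpos
  · have : I = ⊤ := (Ideal.eq_top_iff_one _).mpr (by simpa using hn)
    simp [this, Ideal.radical_top]
  rcases Nat.eq_zero_or_pos m with rfl | hmpos
  · have hJ : J = ⊤ := (Ideal.eq_top_iff_one _).mpr (by simpa using hm)
    have hxJ : x ∈ J := hJ ▸ Submodule.mem_top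
    have hx1 : x ∈ khY Y {a ^ n} := khY_pow_le Y a n hnpos.ne' hx.1
    exact Ideal.le_radical (h (a ^ n) hn ⟨hx1, hxJ⟩)
  have hx1 : x ∈ khY Y {a ^ n} := khY_pow_le Y a n hnpos.ne' hx.1
  have hmem : x ^ m ∈ khY Y {a ^ n} ⊓ J :=
    ⟨Ideal.pow_mem_of_mem _ hx1 m hmpos, hm⟩
  exact ⟨m, h (a ^ n) hn hmem⟩
end

section
/- Let R be a commutative ring with unity, Y ⊆ Spec(R), ideals I, J, K of R. If the product IK is an H_{YJ}-ideal, then I ∩ K is an H_{YJ}-ideal. -/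
variable {R : Type*} [CommRing R]

theorem stmt14 (Y : Set (PrimeSpectrum R)) (I J K : Ideal R)
    (h : IsHYJIdeal Y J (I * K)) : IsHYJIdeal Y J (I ⊓ K) := by
  intro a ha
  have hsq : a * a ∈ I * K := Ideal.mul_mem_mul ha.1 ha.2
  have hk : khY Y {a} = khY Y {a * a} := by
    unfold khY
    congr 1
    ext L
    constructor
    · rintro ⟨P, hP, hs, rfl⟩
      exact ⟨P, hP, by simpa using P.asIdeal.mul_mem_left a (hs rfl), rfl⟩
    · rintro ⟨P, hP, hs, rfl⟩
      refine ⟨P, hP, ?_, rfl⟩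
      intro x hx
      rw [Set.mem_singleton_iff] at hx
      subst hx
      rcases P.isPrime.mem_or_mem (hs rfl) with h' | h' <;> exact h'
  have := h (a * a) hsq
  rw [hk]
  exact le_trans this (le_trans Ideal.mul_le_inf le_rfl)
end

section
/- Let R be a commutative ring with unity, Y ⊆ Spec(R), ideals I, J of R, and P a prime ideal of R. If I ∩ P is an H_{YJ}-ideal, then I is an H_{YJ}-ideal or P is an H_{YJ}-ideal. -/
variable {R : Type*} [CommRing R]

theorem stmt15 (Y : Set (PrimeSpectrum R)) (I J P : Ideal R) (hP : P.IsPrime)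
    (h : IsHYJIdeal Y J (I ⊓ P)) : IsHYJIdeal Y J I ∨ IsHYJIdeal Y J P := by
  by_cases hPI : IsHYJIdeal Y J P
  · exact Or.inr hPI
  left
  simp only [IsHYJIdeal, not_forall] at hPI
  obtain ⟨b, hbP, hb⟩ := hPI
  rw [SetLike.not_le_iff_exists] at hb
  obtain ⟨y, hy, hyP⟩ := hb
  rw [Ideal.mem_inf] at hy
  obtain ⟨hyb, hyJ⟩ := hy
  intro a haI x hx
  rw [Ideal.mem_inf] at hx
  obtain ⟨hxa, hxJ⟩ := hx
  have hxy : x * y ∈ khY Y {a * b} := by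
    rw [khY, Ideal.mem_sInf]
    rintro K ⟨Q, hQY, hab, rfl⟩
    have hmem : a * b ∈ Q.asIdeal := hab (Set.mem_singleton _)
    rcases Q.2.mem_or_mem hmem with h' | h'
    · exact Q.asIdeal.mul_mem_right _
        ((Ideal.mem_sInf.mp hxa) ⟨Q, hQY, Set.singleton_subset_iff.mpr h', rfl⟩)
    · exact Q.asIdeal.mul_mem_left _
        ((Ideal.mem_sInf.mp hyb) ⟨Q, hQY, Set.singleton_subset_iff.mpr h', rfl⟩)
  have habIP : a * b ∈ I ⊓ P := ⟨I.mul_mem_right b haI, P.mul_mem_left a hbP⟩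
  have hxyIP : x * y ∈ I ⊓ P :=
    h (a * b) habIP (Ideal.mem_inf.mpr ⟨hxy, J.mul_mem_right y hxJ⟩)
  have hxP : x ∈ P := (hP.mem_or_mem hxyIP.2).resolve_right hyP
  have haxIP : a * x ∈ I ⊓ P := ⟨I.mul_mem_right x haI, P.mul_mem_left a hxP⟩
  have hxax : x ∈ khY Y {a * x} := by
    rw [khY, Ideal.mem_sInf]
    rintro K ⟨Q, hQY, hab, rfl⟩
    have hmem : a * x ∈ Q.asIdeal := hab (Set.mem_singleton _)
    rcases Q.2.mem_or_mem hmem with h' | h'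
    · exact (Ideal.mem_sInf.mp hxa) ⟨Q, hQY, Set.singleton_subset_iff.mpr h', rfl⟩
    · exact h'
  exact (h (a * x) haxIP (Ideal.mem_inf.mpr ⟨hxax, hxJ⟩)).1
end

section
/- Let R be a commutative ring with unity, Y ⊆ Spec(R), and I, K ideals of R with K ⊆ I, K a strong H_Y-ideal, and (K : I) ⊄ I. Then I is a relative strong H_Y-ideal, i.e., there is an ideal J ⊄ I such that kh_Y(F) ∩ J ⊆ I for every finite F ⊆ I. -/
variable {R : Type*} [CommRing R]

theorem stmt16 (Y : Set (PrimeSpectrum R)) (I K : Ideal R) (hKI : K ≤ I)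
    (hK : IsStrongHYIdeal Y K) (hcol : ¬ K.colon I ≤ I) :
    IsRelativeStrongHYIdeal Y I := by
  refine ⟨K.colon I, hcol, ?_⟩
  classical
  intro F hF x hx
  obtain ⟨hx1, hx2⟩ := hx
  have key : x ∈ khY Y ↑(F.image (x * ·)) := by
    rw [khY, Submodule.mem_sInf]
    rintro J ⟨P, hPY, hFP, rfl⟩
    by_cases hxP : x ∈ P.asIdeal
    · exact hxP
    · have hFsub : (↑F : Set R) ⊆ P.asIdeal := by
        intro f hf
        have : x * f ∈ P.asIdeal := hFP (Finset.mem_image_of_mem _ hf)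
        rcases P.isPrime.mem_or_mem this with h | h
        · exact absurd h hxP
        · exact h
      have : x ∈ khY Y ↑F := hx1
      rw [khY, Submodule.mem_sInf] at this
      exact this _ ⟨P, hPY, hFsub, rfl⟩
  have hsub : (↑(F.image (x * ·)) : Set R) ⊆ (K : Set R) := by
    intro y hy
    simp only [Finset.coe_image, Set.mem_image] at hy
    obtain ⟨f, hf, rfl⟩ := hy
    exact Submodule.mem_colon.mp hx2 f (hF hf)
  exact hKI (hK _ hsub key)
end

section
/- Let R be a commutative ring with unity and Y ⊆ Spec(R) with ⋂_{P∈Y} P = {0}. If every proper ideal of R is a relative H_Y-ideal, then R is von Neumann regular. Conversely, if R is von Neumann regular then every proper ideal is a relative strong H_Y-ideal. -/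
variable {R : Type*} [CommRing R]

/-- The annihilator of a single element, as an ideal. -/
def annIdeal (a : R) : Ideal R where
  carrier := {x | a * x = 0}
  add_mem' := by
    intro x y hx hy
    simp only [Set.mem_setOf_eq] at *
    rw [mul_add, hx, hy, add_zero]
  zero_mem' := by simp
  smul_mem' := by
    intro c x hx
    simp only [smul_eq_mul, Set.mem_setOf_eq] at *
    rw [mul_left_comm, hx, mul_zero]

lemma mem_annIdeal {a x : R} : x ∈ annIdeal a ↔ a * x = 0 := Iff.rfl

lemma khY_mem {Y : Set (PrimeSpectrum R)} {S : Set R} {c : R}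
    (h : ∀ P ∈ Y, S ⊆ (P.asIdeal : Set R) → c ∈ P.asIdeal) : c ∈ khY Y S := by
  refine Submodule.mem_sInf.mpr ?_
  rintro K ⟨P, hP, hS, rfl⟩
  exact h P hP hS

lemma sq_zero_of {Y : Set (PrimeSpectrum R)}
    (hY0 : sInf {J : Ideal R | ∃ P ∈ Y, J = P.asIdeal} = ⊥) {u : R}
    (h : u * u = 0) : u = 0 := by
  have hu : u ∈ sInf {J : Ideal R | ∃ P ∈ Y, J = P.asIdeal} := by
    refine Submodule.mem_sInf.mpr ?_
    rintro K ⟨P, hP, rfl⟩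
    have h2 : u * u ∈ P.asIdeal := by rw [h]; exact zero_mem _
    rcases P.isPrime.mem_or_mem h2 with h' | h' <;> exact h'
  rwa [hY0, Ideal.mem_bot] at hu

lemma exists_idem_gen (h : ∀ a : R, ∃ x : R, a = a ^ 2 * x) (F : Finset R) :
    ∃ e : R, e * e = e ∧ Ideal.span (↑F : Set R) = Ideal.span {e} := by
  classical
  induction F using Finset.induction_on with
  | empty => exact ⟨0, by ring, by rw [Finset.coe_empty, Ideal.span_empty, Ideal.span_singleton_eq_bot.mpr rfl]⟩
  | @insert a F ha ih =>
    obtain ⟨e, he, hspan⟩ := ih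
    obtain ⟨x, hx⟩ := h a
    have hfi : (a * x) * (a * x) = a * x := by linear_combination (-x) * hx
    have haf : a * (a * x) = a := by linear_combination -hx
    refine ⟨(a * x) + e - (a * x) * e, ?_, ?_⟩
    · have hexp : ((a * x) + e - (a * x) * e) * ((a * x) + e - (a * x) * e)
          = ((a*x)*(a*x)) + (e*e) + ((a*x)*(a*x))*(e*e) + 2*((a*x)*e)
            - 2*(((a*x)*(a*x))*e) - 2*((a*x)*(e*e)) := by ring
      rw [hfi, he] at hexp
      rw [hexp]; ring
    · have heg : e * ((a*x) + e - (a*x)*e) = e := by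
        have h1 : e * ((a*x) + e - (a*x)*e) = e*(a*x) + e*e - (a*x)*(e*e) := by ring
        rw [he] at h1
        rw [h1]; ring
      have hag : a * ((a*x) + e - (a*x)*e) = a := by
        have h1 : a * ((a*x) + e - (a*x)*e) = a*(a*x) + a*e - (a*(a*x))*e := by ring
        rw [haf] at h1
        rw [h1]; ring
      apply le_antisymm
      · rw [Finset.coe_insert, Ideal.span_le]
        intro b hb
        rcases hb with hb | hb
        · rw [hb]
          exact Ideal.mem_span_singleton'.mpr ⟨a, hag⟩
        · have hbF : b ∈ Ideal.span ({e} : Set R) := by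
            rw [← hspan]; exact Ideal.subset_span hb
          obtain ⟨c, hc⟩ := Ideal.mem_span_singleton'.mp hbF
          refine Ideal.mem_span_singleton'.mpr ⟨c * e, ?_⟩
          rw [mul_assoc, heg, hc]
      · rw [Ideal.span_le, Set.singleton_subset_iff]
        have haI : a ∈ Ideal.span (insert a (↑F : Set R)) :=
          Ideal.subset_span (Set.mem_insert _ _)
        have heI : e ∈ Ideal.span (insert a (↑F : Set R)) := by
          have h1 : e ∈ Ideal.span (↑F : Set R) := by
            rw [hspan]; exact Ideal.mem_span_singleton_self e
          exact Ideal.span_mono (Set.subset_insert _ _) h1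
        rw [Finset.coe_insert]
        exact sub_mem (add_mem (Ideal.mul_mem_right x _ haI) heI)
          (Ideal.mul_mem_right e _ (Ideal.mul_mem_right x _ haI))

theorem stmt18 (Y : Set (PrimeSpectrum R))
    (hY0 : sInf {J : Ideal R | ∃ P ∈ Y, J = P.asIdeal} = ⊥) :
    ((∀ I : Ideal R, I ≠ ⊤ → IsRelativeHYIdeal Y I) → ∀ a : R, ∃ x : R, a = a ^ 2 * x) ∧
    ((∀ a : R, ∃ x : R, a = a ^ 2 * x) →
      ∀ I : Ideal R, I ≠ ⊤ → IsRelativeStrongHYIdeal Y I) := by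
  constructor
  · -- forward direction
    intro hrel a
    set I : Ideal R := Ideal.span {a ^ 2} ⊔ annIdeal a with hIdef
    by_cases hI : I = ⊤
    · -- 1 = a²x + s with a s = 0, hence a = a³x
      have h1 : (1 : R) ∈ I := hI ▸ Submodule.mem_top
      obtain ⟨y, hy, s, hs, hys⟩ := Submodule.mem_sup.mp h1
      obtain ⟨x, hx⟩ := Ideal.mem_span_singleton'.mp hy
      rw [mem_annIdeal] at hs
      refine ⟨a * x, ?_⟩
      linear_combination a * hys.symm - a * hx + hs
    · obtain ⟨J, hJI, hHYJ⟩ := hrel I hI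
      rw [SetLike.le_def] at hJI
      push_neg at hJI
      obtain ⟨j, hjJ, hjI⟩ := hJI
      have ha2I : a ^ 2 ∈ I :=
        Ideal.mem_sup_left (Ideal.subset_span (Set.mem_singleton _))
      -- a * j ∈ khY {a²} ⊓ J ⊆ I
      have haj : a * j ∈ I := by
        refine hHYJ (a ^ 2) ha2I (Submodule.mem_inf.mpr ⟨?_, Ideal.mul_mem_left J a hjJ⟩)
        refine khY_mem ?_
        intro P hP hsub
        have h2 : a ^ 2 ∈ P.asIdeal := hsub (Set.mem_singleton _)
        exact Ideal.mul_mem_right j _ (P.isPrime.mem_of_pow_mem 2 h2)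
      obtain ⟨y, hy, s, hs, hys⟩ := Submodule.mem_sup.mp haj
      obtain ⟨x, hx⟩ := Ideal.mem_span_singleton'.mp hy
      rw [mem_annIdeal] at hs
      -- a * (j - a x) = s, and a s = 0 so (a(j-ax))² = 0, so a(j-ax) = 0
      have hau : a * (j - a * x) = s := by linear_combination -hys - hx
      have hsq : (a * (j - a * x)) * (a * (j - a * x)) = 0 := by
        linear_combination (a * (j - a * x)) * hau + (j - a * x) * hs
      have hau0 : a * (j - a * x) = 0 := sq_zero_of hY0 hsq
      -- j² = x² a² + (j - ax)², which lies in I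
      have hj2 : j ^ 2 ∈ I := by
        refine Submodule.mem_sup.mpr ⟨(x * x) * a ^ 2,
          Ideal.mem_span_singleton'.mpr ⟨x * x, rfl⟩, (j - a * x) * (j - a * x), ?_, ?_⟩
        · rw [mem_annIdeal]
          linear_combination (j - a * x) * hau0
        · linear_combination (-2 * x) * hau0
      have hjI' : j ∈ I := by
        refine hHYJ (j ^ 2) hj2 (Submodule.mem_inf.mpr ⟨?_, hjJ⟩)
        refine khY_mem ?_
        intro P hP hsub
        exact P.isPrime.mem_of_pow_mem 2 (hsub (Set.mem_singleton _))
      exact (hjI hjI').elim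
  · -- converse direction
    intro h I hI
    refine ⟨⊤, fun hle => hI (top_le_iff.mp hle), ?_⟩
    intro F hF c hc
    obtain ⟨hc1, -⟩ := Submodule.mem_inf.mp hc
    obtain ⟨e, he, hspan⟩ := exists_idem_gen h F
    have key : c * (1 - e) = 0 := by
      have hmem : c * (1 - e) ∈ sInf {J : Ideal R | ∃ P ∈ Y, J = P.asIdeal} := by
        refine Submodule.mem_sInf.mpr ?_
        rintro K ⟨P, hPY, rfl⟩
        by_cases hFP : (↑F : Set R) ⊆ (P.asIdeal : Set R)
        · have hcP : c ∈ P.asIdeal := Submodule.mem_sInf.mp hc1 _ ⟨P, hPY, hFP, rfl⟩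
          exact Ideal.mul_mem_right _ _ hcP
        · have heP : e ∉ P.asIdeal := by
            intro heP
            refine hFP fun b hb => ?_
            have hbe : b ∈ Ideal.span ({e} : Set R) := by
              rw [← hspan]; exact Ideal.subset_span hb
            obtain ⟨d, hd⟩ := Ideal.mem_span_singleton'.mp hbe
            rw [← hd]
            exact Ideal.mul_mem_left _ d heP
          have h0 : e * (1 - e) ∈ P.asIdeal := by
            rw [mul_sub, mul_one, he, sub_self]
            exact zero_mem _
          rcases P.isPrime.mem_or_mem h0 with h' | h'
          · exact absurd h' heP
          · exact Ideal.mul_mem_left _ c h'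
      rwa [hY0, Ideal.mem_bot] at hmem
    have hce : c = c * e := by linear_combination key
    have hcI : c ∈ Ideal.span ({e} : Set R) :=
      hce ▸ Ideal.mem_span_singleton'.mpr ⟨c, rfl⟩
    rw [← hspan] at hcI
    exact Ideal.span_le.mpr hF hcI
end

section
/- Let R be a commutative ring with unity, Y ⊆ Spec(R), and I, J ideals of R. Suppose J is an H_Y-ideal. Then I is an H_{YJ}-ideal if and only if I ∩ J is an H_Y-ideal. -/
variable {R : Type*} [CommRing R]

theorem stmt19 (Y : Set (PrimeSpectrum R)) (I J : Ideal R) (hJ : IsHYIdeal Y J) :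
    IsHYJIdeal Y J I ↔ IsHYIdeal Y (I ⊓ J) := by
  have hmem : ∀ (a x : R), x ∈ khY Y {a} ↔
      ∀ P ∈ Y, a ∈ P.asIdeal → x ∈ P.asIdeal := by
    intro a x
    simp only [khY, Submodule.mem_sInf]
    constructor
    · intro h P hP ha
      exact h _ ⟨P, hP, Set.singleton_subset_iff.mpr ha, rfl⟩
    · rintro h L ⟨P, hP, ha, rfl⟩
      exact h P hP (Set.singleton_subset_iff.mp ha)
  constructor
  · intro hI a ha x hx
    obtain ⟨haI, haJ⟩ := ha
    refine ⟨hI a haI ⟨hx, hJ a haJ hx⟩, hJ a haJ hx⟩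
  · intro hIJ a ha x hx
    obtain ⟨hx1, hx2⟩ := hx
    have hax : a * x ∈ I ⊓ J := ⟨I.mul_mem_right x ha, J.mul_mem_left a hx2⟩
    have : x ∈ khY Y {a * x} := by
      rw [hmem]
      intro P hP haxP
      rcases P.isPrime.mem_or_mem haxP with h | h
      · exact (hmem a x).mp hx1 P hP h
      · exact h
    exact (hIJ (a * x) hax this).1
end
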